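/- arXiv:2308.00833 — 2 statements merged into one kernel-verified Lean document; each statement's English description precedes it below -/
import Mathlib

section
/- The counterclockwise circle integral ∮_{C(i,1)} (1 + iz − 3iz³ − i)/((z−i)⁵(z+i)³) dz over the circle of center i and radius 1 in ℂ equals (−33 + 45i)π/192, i.e. −11π/64 + 15πi/64. -/
open Complex Real

private lemma circleIntegrable_const_mul' {f : ℂ → ℂ} {c : ℂ} {R : ℝ} (a : ℂ)
    (hf : CircleIntegrable f c R) : CircleIntegrable (fun z => a * f z) c R :=
  IntervalIntegrable.const_mul hf a

private lemma my_integral_add {f g : ℂ → ℂ} {c : ℂ} {R : ℝ} (hf : CircleIntegrable f c R)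
    (hg : CircleIntegrable g c R) :
    (∮ z in C(c, R), f z + g z) = (∮ z in C(c, R), f z) + ∮ z in C(c, R), g z := by
  simp only [circleIntegral, smul_add, intervalIntegral.integral_add hf.out hg.out]

private lemma pf_aux (a b c d e f g h x y : ℂ) (hx : x ≠ 0) (hy : y ≠ 0) :
    (a * y ^ 3 + b * x * y ^ 3 + c * x ^ 2 * y ^ 3 + d * x ^ 3 * y ^ 3 + e * x ^ 4 * y ^ 3 +
        (f * y ^ 2 + g * y + h) * x ^ 5) / (x ^ 5 * y ^ 3) =
      a / x ^ 5 + b / x ^ 4 + c / x ^ 3 + d / x ^ 2 + e / x +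
        (f * y ^ 2 + g * y + h) / y ^ 3 := by
  have hD : x ^ 5 * y ^ 3 ≠ 0 := mul_ne_zero (pow_ne_zero _ hx) (pow_ne_zero _ hy)
  have hy3 : y ^ 3 ≠ 0 := pow_ne_zero _ hy
  have e1 : a * y ^ 3 / (x ^ 5 * y ^ 3) = a / x ^ 5 :=
    (div_eq_div_iff hD (pow_ne_zero 5 hx)).mpr (by ring)
  have e2 : b * x * y ^ 3 / (x ^ 5 * y ^ 3) = b / x ^ 4 :=
    (div_eq_div_iff hD (pow_ne_zero 4 hx)).mpr (by ring)
  have e3 : c * x ^ 2 * y ^ 3 / (x ^ 5 * y ^ 3) = c / x ^ 3 :=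
    (div_eq_div_iff hD (pow_ne_zero 3 hx)).mpr (by ring)
  have e4 : d * x ^ 3 * y ^ 3 / (x ^ 5 * y ^ 3) = d / x ^ 2 :=
    (div_eq_div_iff hD (pow_ne_zero 2 hx)).mpr (by ring)
  have e5 : e * x ^ 4 * y ^ 3 / (x ^ 5 * y ^ 3) = e / x := by
    have := (div_eq_div_iff hD (pow_ne_zero 1 hx)).mpr
      (show e * x ^ 4 * y ^ 3 * x ^ 1 = e * (x ^ 5 * y ^ 3) by ring)
    rwa [pow_one] at this
  have e6 : (f * y ^ 2 + g * y + h) * x ^ 5 / (x ^ 5 * y ^ 3) = (f * y ^ 2 + g * y + h) / y ^ 3 :=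
    (div_eq_div_iff hD hy3).mpr (by ring)
  rw [add_div, add_div, add_div, add_div, add_div, e1, e2, e3, e4, e5, e6]

private lemma zpow_conv (a w : ℂ) (n : ℕ) :
    (fun z : ℂ => a / (z - w) ^ n) = fun z : ℂ => a * (z - w) ^ (-(n : ℤ)) := by
  funext z
  rw [div_eq_mul_inv, ← zpow_natCast, ← zpow_neg]

set_option maxHeartbeats 1000000 in
/-- `∮_{C(i,1)} (1 + iz − 3iz³ − i)/((z−i)⁵(z+i)³) dz = (−33 + 45i)π/192`. -/
theorem circleIntegral_phi2 :
    (∮ z in C(I, 1), (1 + I * z - 3 * I * z ^ 3 - I) / ((z - I) ^ 5 * (z + I) ^ 3)) =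
      (-33 + 45 * I) * (π : ℂ) / 192 := by
  have hInotOn : (I : ℂ) ∉ Metric.sphere I |(1 : ℝ)| := by simp
  have hzI : ∀ z ∈ Metric.sphere I (1 : ℝ), z - I ≠ 0 := by
    intro z hz
    simp only [Metric.mem_sphere, Complex.dist_eq] at hz
    intro h0
    rw [h0] at hz
    simp at hz
  have hzmI : ∀ z ∈ Metric.closedBall I (1 : ℝ), z + I ≠ 0 := by
    intro z hz
    simp only [Metric.mem_closedBall, Complex.dist_eq] at hz
    intro h0
    have hz' : z = -I := by linear_combination h0
    rw [hz'] at hz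
    have h2 : ‖(-I - I : ℂ)‖ = 2 := by
      have : (-I - I : ℂ) = -2 * I := by ring
      rw [this]
      simp
    rw [h2] at hz
    norm_num at hz
  have key : Set.EqOn
      (fun z : ℂ => (1 + I * z - 3 * I * z ^ 3 - I) / ((z - I) ^ 5 * (z + I) ^ 3))
      (fun z : ℂ => (1 - 3 * I) / 8 / (z - I) ^ 5 + (-11 + 3 * I) / 16 / (z - I) ^ 4 +
        (-3 - 3 * I) / 16 / (z - I) ^ 3 + (3 - 5 * I) / 32 / (z - I) ^ 2 +
        (15 + 11 * I) / 128 / (z - I) +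
        ((-15 - 11 * I) / 128 * (z + I) ^ 2 + (5 - 5 * I) / 64 * (z + I) + (1 + 5 * I) / 32)
          / (z + I) ^ 3)
      (Metric.sphere I (1 : ℝ)) := by
    intro z hz
    have h1 : z - I ≠ 0 := hzI z hz
    have h2 : z + I ≠ 0 := hzmI z (Metric.sphere_subset_closedBall hz)
    have hnum : (1 + I * z - 3 * I * z ^ 3 - I : ℂ) =
        (1 - 3 * I) / 8 * (z + I) ^ 3 + (-11 + 3 * I) / 16 * (z - I) * (z + I) ^ 3 +
        (-3 - 3 * I) / 16 * (z - I) ^ 2 * (z + I) ^ 3 +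
        (3 - 5 * I) / 32 * (z - I) ^ 3 * (z + I) ^ 3 +
        (15 + 11 * I) / 128 * (z - I) ^ 4 * (z + I) ^ 3 +
        ((-15 - 11 * I) / 128 * (z + I) ^ 2 + (5 - 5 * I) / 64 * (z + I) + (1 + 5 * I) / 32)
          * (z - I) ^ 5 := by
      linear_combination ((1:ℂ) - (1/8) * z ^ 3 + (11/16) * z ^ 4 + (5/32) * z ^ 5
        - (11/64) * z ^ 6 - I + z * I - (3/8) * z ^ 2 * I - (5/4) * z ^ 3 * I
        + (5/32) * z ^ 4 * I + (11/32) * z ^ 5 * I - I ^ 2 - (3/8) * z * I ^ 2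
        + (9/8) * z ^ 2 * I ^ 2 - (15/16) * z ^ 3 * I ^ 2 + (11/64) * z ^ 4 * I ^ 2
        + (7/8) * I ^ 3 - (5/4) * z * I ^ 3 + (5/16) * z ^ 2 * I ^ 3 - (11/16) * z ^ 3 * I ^ 3
        + (11/16) * I ^ 4 + (25/32) * z * I ^ 4 + (11/64) * z ^ 2 * I ^ 4 - (15/32) * I ^ 5
        + (11/32) * z * I ^ 5 - (11/64) * I ^ 6) * Complex.I_sq
    show (1 + I * z - 3 * I * z ^ 3 - I) / ((z - I) ^ 5 * (z + I) ^ 3) = _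
    rw [hnum, pf_aux _ _ _ _ _ _ _ _ _ _ h1 h2]
  rw [circleIntegral.integral_congr (by norm_num) key]
  -- integrability of the pieces
  have intz : ∀ n : ℕ, CircleIntegrable (fun z : ℂ => (z - I) ^ (-(n : ℤ))) I 1 := by
    intro n
    rw [circleIntegrable_sub_zpow_iff]
    right; right; exact hInotOn
  have int5 : CircleIntegrable (fun z : ℂ => (1 - 3 * I) / 8 / (z - I) ^ 5) I 1 := by
    rw [zpow_conv]; exact circleIntegrable_const_mul' _ (intz 5)
  have int4 : CircleIntegrable (fun z : ℂ => (-11 + 3 * I) / 16 / (z - I) ^ 4) I 1 := by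
    rw [zpow_conv]; exact circleIntegrable_const_mul' _ (intz 4)
  have int3 : CircleIntegrable (fun z : ℂ => (-3 - 3 * I) / 16 / (z - I) ^ 3) I 1 := by
    rw [zpow_conv]; exact circleIntegrable_const_mul' _ (intz 3)
  have int2 : CircleIntegrable (fun z : ℂ => (3 - 5 * I) / 32 / (z - I) ^ 2) I 1 := by
    rw [zpow_conv]; exact circleIntegrable_const_mul' _ (intz 2)
  have int1 : CircleIntegrable (fun z : ℂ => (15 + 11 * I) / 128 / (z - I)) I 1 := by
    have : (fun z : ℂ => (15 + 11 * I) / 128 / (z - I)) =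
        fun z : ℂ => (15 + 11 * I) / 128 * (z - I)⁻¹ := by
      funext z; rw [div_eq_mul_inv]
    rw [this]
    exact circleIntegrable_const_mul' _
      (by rw [circleIntegrable_sub_inv_iff]; right; exact hInotOn)
  have inth : CircleIntegrable (fun z : ℂ =>
      ((-15 - 11 * I) / 128 * (z + I) ^ 2 + (5 - 5 * I) / 64 * (z + I) + (1 + 5 * I) / 32)
        / (z + I) ^ 3) I 1 := by
    apply ContinuousOn.circleIntegrable (by norm_num)
    apply ContinuousOn.div
    · fun_prop
    · fun_prop
    · intro z hz
      exact pow_ne_zero _ (hzmI z (Metric.sphere_subset_closedBall hz))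
  -- values
  have Ih : (∮ z in C(I, 1),
      ((-15 - 11 * I) / 128 * (z + I) ^ 2 + (5 - 5 * I) / 64 * (z + I) + (1 + 5 * I) / 32)
        / (z + I) ^ 3) = 0 := by
    apply Complex.circleIntegral_eq_zero_of_differentiable_on_off_countable (by norm_num)
      Set.countable_empty
    · apply ContinuousOn.div
      · fun_prop
      · fun_prop
      · intro z hz
        exact pow_ne_zero _ (hzmI z hz)
    · intro z hz
      have h2 : z + I ≠ 0 := hzmI z (Metric.ball_subset_closedBall hz.1)
      apply DifferentiableAt.div
      · fun_prop
      · fun_prop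
      · exact pow_ne_zero _ h2
  have Iz : ∀ a : ℂ, ∀ n : ℕ, 2 ≤ n → (∮ z in C(I, 1), a / (z - I) ^ n) = 0 := by
    intro a n hn
    rw [zpow_conv, circleIntegral.integral_const_mul,
      circleIntegral.integral_sub_zpow_of_ne (by omega) I I 1, mul_zero]
  have I1 : (∮ z in C(I, 1), (15 + 11 * I) / 128 / (z - I)) =
      (15 + 11 * I) / 128 * (2 * π * I) := by
    have hfn : (fun z : ℂ => (15 + 11 * I) / 128 / (z - I)) =
        fun z : ℂ => (15 + 11 * I) / 128 * (z - I)⁻¹ := by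
      funext z; rw [div_eq_mul_inv]
    rw [hfn, circleIntegral.integral_const_mul,
      circleIntegral.integral_sub_center_inv I (by norm_num : (1:ℝ) ≠ 0)]
  have i54 : CircleIntegrable (fun z : ℂ => (1 - 3 * I) / 8 / (z - I) ^ 5 + (-11 + 3 * I) / 16 / (z - I) ^ 4) I 1 := int5.add int4
  have i543 : CircleIntegrable (fun z : ℂ => (1 - 3 * I) / 8 / (z - I) ^ 5 + (-11 + 3 * I) / 16 / (z - I) ^ 4 + (-3 - 3 * I) / 16 / (z - I) ^ 3) I 1 := i54.add int3
  have i5432 : CircleIntegrable (fun z : ℂ => (1 - 3 * I) / 8 / (z - I) ^ 5 + (-11 + 3 * I) / 16 / (z - I) ^ 4 + (-3 - 3 * I) / 16 / (z - I) ^ 3 + (3 - 5 * I) / 32 / (z - I) ^ 2) I 1 := i543.add int2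
  have i54321 : CircleIntegrable (fun z : ℂ => (1 - 3 * I) / 8 / (z - I) ^ 5 + (-11 + 3 * I) / 16 / (z - I) ^ 4 + (-3 - 3 * I) / 16 / (z - I) ^ 3 + (3 - 5 * I) / 32 / (z - I) ^ 2 + (15 + 11 * I) / 128 / (z - I)) I 1 := i5432.add int1
  rw [my_integral_add i54321 inth,
    my_integral_add i5432 int1,
    my_integral_add i543 int2,
    my_integral_add i54 int3,
    my_integral_add int5 int4, Ih, I1,
    Iz _ 5 (by norm_num), Iz _ 4 (by norm_num), Iz _ 3 (by norm_num), Iz _ 2 (by norm_num)]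
  linear_combination (11 / 64 : ℂ) * (π : ℂ) * Complex.I_sq
end

section
/- The counterclockwise circle integral ∮_{C(i,1)} (5z³ − z)/((z−i)⁵(z+i)²) dz over the circle of center i and radius 1 in ℂ equals −π/16. -/
open Complex Real

lemma sphere_ne_I {z : ℂ} (hz : z ∈ Metric.sphere I 1) : z - I ≠ 0 := by
  intro h
  have : dist z I = 1 := hz
  rw [sub_eq_zero] at h
  simp [h] at this

lemma sphere_ne_negI {z : ℂ} (hz : z ∈ Metric.sphere I 1) : z + I ≠ 0 := by
  intro h
  have h1 : dist z I = 1 := hz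
  have h2 : z = -I := by linear_combination h
  have h3 : (-I : ℂ) - I = -2 * I := by ring
  rw [h2, Complex.dist_eq, h3] at h1
  simp at h1

lemma closedBall_ne_negI {z : ℂ} (hz : z ∈ Metric.closedBall I 1) : z + I ≠ 0 := by
  intro h
  have h2 : z = -I := by linear_combination h
  have h3 : (-I : ℂ) - I = -2 * I := by ring
  rw [h2, Metric.mem_closedBall, Complex.dist_eq, h3] at hz
  simp at hz

lemma circleIntegral_add' {f g : ℂ → ℂ} {c : ℂ} {R : ℝ}
    (hf : CircleIntegrable f c R) (hg : CircleIntegrable g c R) :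
    (∮ z in C(c, R), (f z + g z)) =
      (∮ z in C(c, R), f z) + (∮ z in C(c, R), g z) := by
  simp only [circleIntegral, smul_add]
  exact intervalIntegral.integral_add hf.out hg.out

set_option maxHeartbeats 1000000 in
/-- `∮_{C(i,1)} (5z³ − z)/((z−i)⁵(z+i)²) dz = −π/16`. -/
theorem circleIntegral_phi4_b :
    (∮ z in C(I, 1), (5 * z ^ 3 - z) / ((z - I) ^ 5 * (z + I) ^ 2)) =
      -(π : ℂ) / 16 := by
  have hEq : Set.EqOn (fun z => (5 * z ^ 3 - z) / ((z - I) ^ 5 * (z + I) ^ 2))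
      (fun z => (3 * I / 2) * (z - I) ^ (-5 : ℤ) + ((5 / 2) * (z - I) ^ (-4 : ℤ) +
        ((-7 * I / 8) * (z - I) ^ (-3 : ℤ) + ((1 / 4) * (z - I) ^ (-2 : ℤ) +
        ((I / 32) * (z - I)⁻¹ + (-1/8 - (I/32) * (z - I)) / (z + I) ^ 2)))))
      (Metric.sphere I 1) := by
    intro z hz
    have h1 := sphere_ne_I hz
    have h2 := sphere_ne_negI hz
    have h1' : (z - I)⁻¹ * (z - I) = 1 := inv_mul_cancel₀ h1
    have h2' : (z + I)⁻¹ * (z + I) = 1 := inv_mul_cancel₀ h2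
    have hD : (z - I) ^ 5 * (z + I) ^ 2 ≠ 0 :=
      mul_ne_zero (pow_ne_zero 5 h1) (pow_ne_zero 2 h2)
    simp only [zpow_neg, zpow_ofNat]
    rw [div_eq_iff hD]
    simp only [div_eq_mul_inv, ← inv_pow]
    linear_combination
      (-((3 * I / 2) * (z + I) ^ 2 *
            (1 + (z - I)⁻¹ * (z - I) + ((z - I)⁻¹ * (z - I)) ^ 2 +
              ((z - I)⁻¹ * (z - I)) ^ 3 + ((z - I)⁻¹ * (z - I)) ^ 4)
          + (5 / 2) * (z + I) ^ 2 * (z - I) *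
            (1 + (z - I)⁻¹ * (z - I) + ((z - I)⁻¹ * (z - I)) ^ 2 +
              ((z - I)⁻¹ * (z - I)) ^ 3)
          + (-7 * I / 8) * (z + I) ^ 2 * (z - I) ^ 2 *
            (1 + (z - I)⁻¹ * (z - I) + ((z - I)⁻¹ * (z - I)) ^ 2)
          + (1 / 4) * (z + I) ^ 2 * (z - I) ^ 3 * (1 + (z - I)⁻¹ * (z - I))
          + (I / 32) * (z + I) ^ 2 * (z - I) ^ 4)) * h1'
      + (-(-1/8 - (I/32) * (z - I)) * (z - I) ^ 5 * ((z + I)⁻¹ * (z + I) + 1)) * h2'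
      + ((-1) * z + (5/2) * z^3 - (1/8) * z^5 - 4 * I * z^2
          + (1/2) * I * z^4 + (1/2) * I^2 * z - (3/4) * I^2 * z^3 + I^3
          + (1/2) * I^3 * z^2 - (1/8) * I^4 * z) * Complex.I_mul_I
  rw [circleIntegral.integral_congr zero_le_one hEq]
  have hzpow : ∀ (a : ℂ) (n : ℤ), CircleIntegrable (fun z => a * (z - I) ^ n) I 1 := by
    intro a n
    refine ContinuousOn.circleIntegrable zero_le_one ?_
    exact continuousOn_const.mul (ContinuousOn.zpow₀
      (continuousOn_id.sub continuousOn_const) n fun z hz => Or.inl (sphere_ne_I hz))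
  have hinv : CircleIntegrable (fun z => (I / 32) * (z - I)⁻¹) I 1 := by
    refine ContinuousOn.circleIntegrable zero_le_one ?_
    exact continuousOn_const.mul
      ((continuousOn_id.sub continuousOn_const).inv₀ fun z hz => sphere_ne_I hz)
  have hrem : CircleIntegrable (fun z => (-1/8 - (I/32) * (z - I)) / (z + I) ^ 2) I 1 := by
    refine ContinuousOn.circleIntegrable zero_le_one ?_
    exact ContinuousOn.div
      (continuousOn_const.sub (continuousOn_const.mul
        (continuousOn_id.sub continuousOn_const)))
      ((continuousOn_id.add continuousOn_const).pow 2)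
      (fun z hz => pow_ne_zero 2 (sphere_ne_negI hz))
  have hremzero : (∮ z in C(I, 1), (-1/8 - (I/32) * (z - I)) / (z + I) ^ 2) = 0 := by
    refine circleIntegral_eq_zero_of_differentiable_on_off_countable zero_le_one
      Set.countable_empty ?_ ?_
    · exact ContinuousOn.div
        (continuousOn_const.sub (continuousOn_const.mul
          (continuousOn_id.sub continuousOn_const)))
        ((continuousOn_id.add continuousOn_const).pow 2)
        (fun z hz => pow_ne_zero 2 (closedBall_ne_negI hz))
    · intro z hz
      exact DifferentiableAt.div (by fun_prop) (by fun_prop)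
        (pow_ne_zero 2 (closedBall_ne_negI (Metric.ball_subset_closedBall hz.1)))
  rw [circleIntegral_add', circleIntegral_add', circleIntegral_add', circleIntegral_add',
    circleIntegral_add', hremzero, circleIntegral.integral_const_mul,
    circleIntegral.integral_const_mul, circleIntegral.integral_const_mul,
    circleIntegral.integral_const_mul, circleIntegral.integral_const_mul,
    circleIntegral.integral_sub_zpow_of_ne (by decide),
    circleIntegral.integral_sub_zpow_of_ne (by decide),
    circleIntegral.integral_sub_zpow_of_ne (by decide),
    circleIntegral.integral_sub_zpow_of_ne (by decide),
    circleIntegral.integral_sub_inv_of_mem_ball (Metric.mem_ball_self one_pos)]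
  · linear_combination (π : ℂ) / 16 * Complex.I_mul_I
  · exact hinv
  · exact hrem
  · exact hzpow _ _
  · exact hinv.add hrem
  · exact hzpow _ _
  · exact (hzpow _ _).add (hinv.add hrem)
  · exact hzpow _ _
  · exact (hzpow _ _).add ((hzpow _ _).add (hinv.add hrem))
  · exact hzpow _ _
  · exact (hzpow _ _).add ((hzpow _ _).add ((hzpow _ _).add (hinv.add hrem)))
end
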